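/- arXiv:2310.10582 — 4 statements merged into one kernel-verified Lean document; each statement's English description precedes it below -/
import Mathlib

section
/- For every t ∈ ℝ and every α ∈ ℂ, taking ν = ω in the two-times measurement protocol gives 𝔉_{ω,t}(α) := ∑_{(b,a)∈𝒜×𝒜} λ_b^{α}·λ_a^{−α}·p_{ω,t}(b,a) = trace(ω_{−t}^{α}·ω^{1−α}). -/
/-!
Since `ω` is diagonal in the orthogonal projections `P_a`, we have `P_a ω P_a = λ_a P_a`, so
by cyclicity of the trace `p_{ω,t}(b,a) = λ_a · trace(e^{itH} P_b e^{-itH} P_a)`. Expanding `ω^α` and `ω^{1-α}` on the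
right-hand side gives the same double sum, because `λ_a^{1-α} = λ_a · λ_a^{-α}` for `λ_a > 0`.
-/

open Matrix NormedSpace
open scoped ComplexOrder

noncomputable section

/-- The two-times measurement statistics
`p_{ν,t}(b,a) = trace(exp(−itH)·P_a·ν·P_a·exp(itH)·P_b)`. -/
def ttm {n 𝒜 : Type*} [Fintype n] [DecidableEq n]
    (H : Matrix n n ℂ) (P : 𝒜 → Matrix n n ℂ) (ν : Matrix n n ℂ) (t : ℝ) (b a : 𝒜) : ℂ :=
  (NormedSpace.exp ((-(Complex.I * t)) • H) * P a * ν * P a * NormedSpace.exp ((Complex.I * t) • H) * P b).trace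

/-- The complex power `ω^z = ∑_a λ_a^z · P_a` of `ω = ∑_a λ_a · P_a`. -/
def omegaPow {n 𝒜 : Type*} [Fintype 𝒜] (lam : 𝒜 → ℝ) (P : 𝒜 → Matrix n n ℂ) (z : ℂ) :
    Matrix n n ℂ :=
  ∑ a, ((lam a : ℂ) ^ z) • P a

/-- The pinching `ν̄ = ∑_a P_a·ν·P_a`. -/
def pinch {n 𝒜 : Type*} [Fintype n] [Fintype 𝒜]
    (P : 𝒜 → Matrix n n ℂ) (ν : Matrix n n ℂ) : Matrix n n ℂ :=
  ∑ a, P a * ν * P a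

theorem OrthogonalIdempotents.mul_sum_smul {R A ι : Type*} [Fintype ι] [CommSemiring R]
    [Semiring A] [Algebra R A] {e : ι → A} (he : OrthogonalIdempotents e) (f : ι → R) (i : ι) :
    e i * ∑ j, f j • e j = f i • e i := by
  classical
  simp only [Finset.mul_sum, mul_smul_comm, he.mul_eq, smul_ite, smul_zero,
    Finset.sum_ite_eq, Finset.mem_univ, if_true]

theorem OrthogonalIdempotents.mul_sum_smul_mul {R A ι : Type*} [Fintype ι] [CommSemiring R]
    [Semiring A] [Algebra R A] {e : ι → A} (he : OrthogonalIdempotents e) (f : ι → R) (i : ι) :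
    e i * (∑ j, f j • e j) * e i = f i • e i := by
  rw [he.mul_sum_smul, smul_mul_assoc, (he.idem i).eq]

theorem ttm_eq_trace_mul_sandwich {n 𝒜 : Type*} [Fintype n] [DecidableEq n]
    (H : Matrix n n ℂ) (P : 𝒜 → Matrix n n ℂ) (ν : Matrix n n ℂ) (t : ℝ) (b a : 𝒜) :
    ttm H P ν t b a = (exp ((Complex.I * t) • H) * P b * exp ((-(Complex.I * t)) • H) *
      (P a * ν * P a)).trace := by
  set U := exp ((Complex.I * t) • H)
  set V := exp ((-(Complex.I * t)) • H)
  calc ttm H P ν t b a = (V * (P a * ν * P a) * (U * P b)).trace := by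
        simp only [ttm, U, V, Matrix.mul_assoc]
    _ = (U * P b * V * (P a * ν * P a)).trace := by
        rw [trace_mul_comm, Matrix.mul_assoc (U * P b)]

theorem trace_mul_omegaPow_mul_omegaPow {n 𝒜 : Type*} [Fintype n] [Fintype 𝒜]
    (lam : 𝒜 → ℝ) (P : 𝒜 → Matrix n n ℂ) (X Y : Matrix n n ℂ) (z w : ℂ) :
    (X * omegaPow lam P z * Y * omegaPow lam P w).trace =
      ∑ b, ∑ a, (lam b : ℂ) ^ z * (lam a : ℂ) ^ w * (X * P b * Y * P a).trace := by
  simp only [omegaPow, Finset.mul_sum, Finset.sum_mul, trace_sum, mul_smul_comm, smul_mul_assoc,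
    trace_smul, smul_eq_mul]
  rw [Finset.sum_comm]
  exact Finset.sum_congr rfl fun _ _ => Finset.sum_congr rfl fun _ _ => by ring

theorem mgf_omega_eq_trace_general
    {n 𝒜 : Type*} [Fintype n] [DecidableEq n]
    [Fintype 𝒜]
    (H : Matrix n n ℂ)
    (P : 𝒜 → Matrix n n ℂ)
    (hPidem : ∀ a, P a * P a = P a)
    (hPorth : ∀ a b, a ≠ b → P a * P b = 0)
    (lam : 𝒜 → ℝ) (hlampos : ∀ a, 0 < lam a)
    (t : ℝ) (α : ℂ) :
    ∑ x : 𝒜 × 𝒜,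
        (lam x.1 : ℂ) ^ α * (lam x.2 : ℂ) ^ (-α) *
          ttm H P (∑ a, (lam a : ℂ) • P a) t x.1 x.2 =
      (NormedSpace.exp ((Complex.I * t) • H) * omegaPow lam P α * NormedSpace.exp ((-(Complex.I * t)) • H) *
        omegaPow lam P (1 - α)).trace := by
  have hP : OrthogonalIdempotents P := ⟨hPidem, hPorth⟩
  rw [trace_mul_omegaPow_mul_omegaPow, Fintype.sum_prod_type]
  refine Finset.sum_congr rfl fun b _ => Finset.sum_congr rfl fun a _ => ?_
  have hlam : (lam a : ℂ) ≠ 0 := Complex.ofReal_ne_zero.mpr (hlampos a).ne'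
  rw [ttm_eq_trace_mul_sandwich, hP.mul_sum_smul_mul, mul_smul_comm, trace_smul, smul_eq_mul,
    Complex.cpow_sub _ _ hlam, Complex.cpow_one, Complex.cpow_neg]
  field_simp

theorem mgf_omega_eq_trace
    {n 𝒜 : Type*} [Fintype n] [DecidableEq n] [Nonempty n]
    [Fintype 𝒜] [DecidableEq 𝒜] [Nonempty 𝒜]
    (H : Matrix n n ℂ) (hH : H.IsHermitian)
    (P : 𝒜 → Matrix n n ℂ)
    (hPherm : ∀ a, (P a).IsHermitian)
    (hPidem : ∀ a, P a * P a = P a)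
    (hPne : ∀ a, P a ≠ 0)
    (hPorth : ∀ a b, a ≠ b → P a * P b = 0)
    (hPsum : ∑ a, P a = 1)
    (lam : 𝒜 → ℝ) (hlampos : ∀ a, 0 < lam a)
    (hlaminj : Function.Injective lam)
    (hlamsum : ∑ a, (lam a : ℂ) * (P a).trace = 1)
    (t : ℝ) (α : ℂ) :
    ∑ x : 𝒜 × 𝒜,
        (lam x.1 : ℂ) ^ α * (lam x.2 : ℂ) ^ (-α) *
          ttm H P (∑ a, (lam a : ℂ) • P a) t x.1 x.2 =
      (NormedSpace.exp ((Complex.I * t) • H) * omegaPow lam P α * NormedSpace.exp ((-(Complex.I * t)) • H) *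
        omegaPow lam P (1 - α)).trace :=
  mgf_omega_eq_trace_general H P hPidem hPorth lam hlampos t α
end
end

section
/- (Finite-dimensional form of Theorem 2(2).) For every t ∈ ℝ and every α ∈ ℂ: trace(ω_{−t}^{α}·ω^{1−α}) = conj( trace(ω_{t}^{1−conj(α)}·ω^{conj(α)}) ); i.e. the moment generating function satisfies 𝔉_{ω,t}(α) = conj(𝔉_{ω,−t}(1 − conj(α))). -/
open Matrix NormedSpace
open scoped ComplexOrder

noncomputable section

/-! Taking the complex conjugate of the trace replaces the product by its adjoint. Since
`(ω^z)ᴴ = ω^(conj z)` and `(exp(itH))ᴴ = exp(-itH)`, the adjoint of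
`exp(-itH)·ω^(1-conj α)·exp(itH)·ω^(conj α)` is `ω^α·exp(-itH)·ω^(1-α)·exp(itH)`, a cyclic
permutation of the product on the left-hand side. -/

/-- The principal power commutes with conjugation away from the branch cut, and
`arg (λ : ℂ) = 0` for `λ ≥ 0`. -/
lemma omegaPow_conjTranspose {n 𝒜 : Type*} [Fintype 𝒜] {lam : 𝒜 → ℝ} (hlam : ∀ a, 0 ≤ lam a)
    {P : 𝒜 → Matrix n n ℂ} (hP : ∀ a, (P a).IsHermitian) (z : ℂ) :
    (omegaPow lam P z)ᴴ = omegaPow lam P (starRingEnd ℂ z) := by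
  rw [omegaPow, omegaPow, conjTranspose_sum]
  refine Finset.sum_congr rfl fun a _ => ?_
  have harg : (lam a : ℂ).arg ≠ Real.pi := by
    rw [Complex.arg_ofReal_of_nonneg (hlam a)]
    exact Real.pi_ne_zero.symm
  rw [conjTranspose_smul, (hP a).eq, Complex.star_def, Complex.cpow_conj _ _ harg,
    Complex.conj_ofReal]

lemma Matrix.IsHermitian.conjTranspose_exp_smul {n : Type*} [Fintype n] [DecidableEq n]
    {H : Matrix n n ℂ} (hH : H.IsHermitian) (c : ℂ) :
    (NormedSpace.exp (c • H))ᴴ = NormedSpace.exp (starRingEnd ℂ c • H) := by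
  rw [← Matrix.exp_conjTranspose, conjTranspose_smul, hH.eq]
  rfl

theorem mgf_time_reflection_general
    {n 𝒜 : Type*} [Fintype n] [DecidableEq n]
    [Fintype 𝒜]
    (H : Matrix n n ℂ) (hH : H.IsHermitian)
    (P : 𝒜 → Matrix n n ℂ)
    (hPherm : ∀ a, (P a).IsHermitian)
    (lam : 𝒜 → ℝ) (hlampos : ∀ a, 0 < lam a)
    (t : ℝ) (α : ℂ) :
    (NormedSpace.exp ((Complex.I * t) • H) * omegaPow lam P α * NormedSpace.exp ((-(Complex.I * t)) • H) *
        omegaPow lam P (1 - α)).trace =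
      (starRingEnd ℂ)
        ((NormedSpace.exp ((-(Complex.I * t)) • H) * omegaPow lam P (1 - (starRingEnd ℂ) α) *
            NormedSpace.exp ((Complex.I * t) • H) * omegaPow lam P ((starRingEnd ℂ) α)).trace) := by
  have hpow := omegaPow_conjTranspose (fun a => (hlampos a).le) hPherm
  have hconj : starRingEnd ℂ (Complex.I * t) = -(Complex.I * t) := by
    rw [map_mul, Complex.conj_I, Complex.conj_ofReal, neg_mul]
  calc _ = (omegaPow lam P α * exp ((-(Complex.I * t)) • H) * omegaPow lam P (1 - α) *
          exp ((Complex.I * t) • H)).trace := by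
        simp only [mul_assoc]; rw [trace_mul_comm]; simp only [mul_assoc]
    _ = _ := by
        refine .trans ?_ (trace_conjTranspose _)
        simp only [conjTranspose_mul, hpow, hH.conjTranspose_exp_smul, map_neg, hconj, neg_neg,
          map_sub, map_one, Complex.conj_conj, mul_assoc]

theorem mgf_time_reflection
    {n 𝒜 : Type*} [Fintype n] [DecidableEq n] [Nonempty n]
    [Fintype 𝒜] [DecidableEq 𝒜] [Nonempty 𝒜]
    (H : Matrix n n ℂ) (hH : H.IsHermitian)
    (P : 𝒜 → Matrix n n ℂ)
    (hPherm : ∀ a, (P a).IsHermitian)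
    (hPidem : ∀ a, P a * P a = P a)
    (hPne : ∀ a, P a ≠ 0)
    (hPorth : ∀ a b, a ≠ b → P a * P b = 0)
    (hPsum : ∑ a, P a = 1)
    (lam : 𝒜 → ℝ) (hlampos : ∀ a, 0 < lam a)
    (hlaminj : Function.Injective lam)
    (hlamsum : ∑ a, (lam a : ℂ) * (P a).trace = 1)
    (t : ℝ) (α : ℂ) :
    (NormedSpace.exp ((Complex.I * t) • H) * omegaPow lam P α * NormedSpace.exp ((-(Complex.I * t)) • H) *
        omegaPow lam P (1 - α)).trace =
      (starRingEnd ℂ)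
        ((NormedSpace.exp ((-(Complex.I * t)) • H) * omegaPow lam P (1 - (starRingEnd ℂ) α) *
            NormedSpace.exp ((Complex.I * t) • H) * omegaPow lam P ((starRingEnd ℂ) α)).trace) :=
  mgf_time_reflection_general H hH P hPherm lam hlampos t α
end
end

section
/- (Finite-dimensional form of Theorem 2(3), the finite time Evans–Searles fluctuation relation.) Under the time-reversal invariance assumption, for every t ∈ ℝ and every α ∈ ℂ: trace(ω_{−t}^{α}·ω^{1−α}) = conj( trace(ω_{−t}^{1−conj(α)}·ω^{conj(α)}) ); i.e. 𝔉_{ω,t}(α) = conj(𝔉_{ω,t}(1 − conj(α))). -/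
open Matrix NormedSpace
open scoped ComplexOrder

noncomputable section

/-!
Time reversal acts on matrices by the antiunitary conjugation `Θ A = U · conj(A) · U*`. This is a
continuous ring endomorphism, so it commutes with `exp`, and `trace (Θ A) = conj (trace A)`. Since
`Θ` fixes `H` and every `P_a`, it sends `exp (s • H)` to `exp (conj s • H)` and `ω^z` to
`ω^(conj z)`. Applying `Θ` inside the trace on the right therefore gives
`trace (e^{-itH} ω^{1-α} e^{itH} ω^α)`, which is the left side by cyclicity of the trace.
-/

theorem Complex.conj_ofReal_cpow {x : ℝ} (hx : 0 ≤ x) (z : ℂ) :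
    starRingEnd ℂ ((x : ℂ) ^ z) = (x : ℂ) ^ starRingEnd ℂ z := by
  have harg : (x : ℂ).arg ≠ Real.pi := by
    rw [Complex.arg_ofReal_of_nonneg hx]
    exact Real.pi_ne_zero.symm
  rw [Complex.cpow_conj _ _ harg, Complex.conj_ofReal]

namespace Matrix

variable {n : Type*} [Fintype n] [DecidableEq n]

def antiunitaryConj (U : unitaryGroup n ℂ) : Matrix n n ℂ →+* Matrix n n ℂ :=
  (Unitary.conjStarAlgAut ℂ (Matrix n n ℂ) U).toRingEquiv.toRingHom.comp
    (starRingEnd ℂ).mapMatrix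

variable (U : unitaryGroup n ℂ)

theorem antiunitaryConj_apply (A : Matrix n n ℂ) :
    antiunitaryConj U A = (U : Matrix n n ℂ) * A.map (starRingEnd ℂ) * (U : Matrix n n ℂ)ᴴ :=
  rfl

theorem continuous_antiunitaryConj : Continuous (antiunitaryConj U) :=
  (continuous_const.matrix_mul (continuous_id.matrix_map Complex.continuous_conj)).matrix_mul
    continuous_const

theorem trace_antiunitaryConj (A : Matrix n n ℂ) :
    (antiunitaryConj U A).trace = starRingEnd ℂ A.trace := by
  rw [antiunitaryConj_apply, trace_mul_cycle, ← star_eq_conjTranspose, Unitary.coe_star_mul_self,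
    one_mul, AddMonoidHom.map_trace]

theorem antiunitaryConj_smul (z : ℂ) (A : Matrix n n ℂ) :
    antiunitaryConj U (z • A) = starRingEnd ℂ z • antiunitaryConj U A := by
  rw [antiunitaryConj_apply, antiunitaryConj_apply, map_smul' _ _ _ (map_mul _), Matrix.mul_smul,
    Matrix.smul_mul]

theorem antiunitaryConj_exp (A : Matrix n n ℂ) :
    antiunitaryConj U (exp A) = exp (antiunitaryConj U A) :=
  -- `map_exp` wants a normed ring; the operator norm induces the usual topology on matrices.
  open scoped Norms.Operator in map_exp _ (continuous_antiunitaryConj U) A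

theorem antiunitaryConj_omegaPow {𝒜 : Type*} [Fintype 𝒜] {lam : 𝒜 → ℝ} {P : 𝒜 → Matrix n n ℂ}
    (hlam : ∀ a, 0 ≤ lam a) (hP : ∀ a, antiunitaryConj U (P a) = P a) (z : ℂ) :
    antiunitaryConj U (omegaPow lam P z) = omegaPow lam P (starRingEnd ℂ z) := by
  simp only [omegaPow, map_sum, antiunitaryConj_smul, hP, Complex.conj_ofReal_cpow (hlam _)]

end Matrix

theorem evans_searles_finite_time_general
    {n 𝒜 : Type*} [Fintype n] [DecidableEq n]
    [Fintype 𝒜]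
    (H : Matrix n n ℂ)
    (P : 𝒜 → Matrix n n ℂ)
    (lam : 𝒜 → ℝ) (hlampos : ∀ a, 0 < lam a)
    (hTR : ∃ U : Matrix n n ℂ, U * Uᴴ = 1 ∧ Uᴴ * U = 1 ∧
      U * U.map (starRingEnd ℂ) = 1 ∧
      U * H.map (starRingEnd ℂ) * Uᴴ = H ∧
      ∀ a, U * (P a).map (starRingEnd ℂ) * Uᴴ = P a)
    (t : ℝ) (α : ℂ) :
    (NormedSpace.exp ((Complex.I * t) • H) * omegaPow lam P α * NormedSpace.exp ((-(Complex.I * t)) • H) *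
        omegaPow lam P (1 - α)).trace =
      (starRingEnd ℂ)
        ((NormedSpace.exp ((Complex.I * t) • H) * omegaPow lam P (1 - (starRingEnd ℂ) α) *
            NormedSpace.exp ((-(Complex.I * t)) • H) * omegaPow lam P ((starRingEnd ℂ) α)).trace) := by
  obtain ⟨U, hUUh, hUhU, -, hUH, hUP⟩ := hTR
  let u : unitaryGroup n ℂ := ⟨U, hUhU, hUUh⟩
  have hH_fixed : antiunitaryConj u H = H := hUH
  have hexp (s : ℂ) : antiunitaryConj u (exp (s • H)) = exp (starRingEnd ℂ s • H) := by
    rw [antiunitaryConj_exp, antiunitaryConj_smul, hH_fixed]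
  have hω := antiunitaryConj_omegaPow u (fun a => (hlampos a).le) hUP
  rw [← trace_antiunitaryConj u, map_mul, map_mul, map_mul, hexp, hexp, hω, hω]
  simp only [map_neg, map_mul, map_sub, map_one, Complex.conj_I, Complex.conj_ofReal,
    Complex.conj_conj, neg_mul, neg_neg, Matrix.mul_assoc]
  rw [trace_mul_cycle', Matrix.mul_assoc]

theorem evans_searles_finite_time
    {n 𝒜 : Type*} [Fintype n] [DecidableEq n] [Nonempty n]
    [Fintype 𝒜] [DecidableEq 𝒜] [Nonempty 𝒜]
    (H : Matrix n n ℂ) (hH : H.IsHermitian)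
    (P : 𝒜 → Matrix n n ℂ)
    (hPherm : ∀ a, (P a).IsHermitian)
    (hPidem : ∀ a, P a * P a = P a)
    (hPne : ∀ a, P a ≠ 0)
    (hPorth : ∀ a b, a ≠ b → P a * P b = 0)
    (hPsum : ∑ a, P a = 1)
    (lam : 𝒜 → ℝ) (hlampos : ∀ a, 0 < lam a)
    (hlaminj : Function.Injective lam)
    (hlamsum : ∑ a, (lam a : ℂ) * (P a).trace = 1)
    (hTR : ∃ U : Matrix n n ℂ, U * Uᴴ = 1 ∧ Uᴴ * U = 1 ∧
      U * U.map (starRingEnd ℂ) = 1 ∧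
      U * H.map (starRingEnd ℂ) * Uᴴ = H ∧
      ∀ a, U * (P a).map (starRingEnd ℂ) * Uᴴ = P a)
    (t : ℝ) (α : ℂ) :
    (NormedSpace.exp ((Complex.I * t) • H) * omegaPow lam P α * NormedSpace.exp ((-(Complex.I * t)) • H) *
        omegaPow lam P (1 - α)).trace =
      (starRingEnd ℂ)
        ((NormedSpace.exp ((Complex.I * t) • H) * omegaPow lam P (1 - (starRingEnd ℂ) α) *
            NormedSpace.exp ((-(Complex.I * t)) • H) * omegaPow lam P ((starRingEnd ℂ) α)).trace) :=
  evans_searles_finite_time_general H P lam hlampos hTR t α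
end
end

section
/- Under the time-reversal invariance assumption, the two-times measurement statistics with initial state ω satisfies the pointwise detailed balance relation: for all t ∈ ℝ and all a, b ∈ 𝒜, p_{ω,t}(a,b) = (λ_b/λ_a)·p_{ω,t}(b,a), i.e. p_{ω,t}(a,b) = exp(−ℰ(b,a))·p_{ω,t}(b,a). -/
open Matrix NormedSpace
open scoped ComplexOrder

noncomputable section

/-!
Because `P_a ω P_a = λ_a P_a`, `p_{ω,t}(b,a) = λ_a · tr(e^{-itH} P_a e^{itH} P_b)`.
This trace correlation is real, as `H` and the `P_a` are Hermitian, and time-reversal invariance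
identifies its complex conjugate with the same correlation for `a` and `b` swapped. It is therefore
symmetric in `a, b`, and the two statistics differ by the factor `λ_b / λ_a`.
-/

theorem mul_sum_smul_mul_of_orthogonal {ι S R : Type*} [Fintype ι] [CommSemiring S]
    [Semiring R] [Algebra S R] {P : ι → R} (hidem : ∀ a, P a * P a = P a)
    (horth : ∀ a b, a ≠ b → P a * P b = 0) (μ : ι → S) (c : ι) :
    P c * (∑ d, μ d • P d) * P c = μ c • P c := by
  rw [Finset.mul_sum, Finset.sum_mul, Finset.sum_eq_single c]
  · rw [mul_smul_comm, smul_mul_assoc, hidem, hidem]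
  · intro d _ hd
    rw [mul_smul_comm, smul_mul_assoc, horth c d hd.symm, zero_mul, smul_zero]
  · exact fun h => (h (Finset.mem_univ c)).elim

namespace Matrix

theorem trace_map_conj {n : Type*} [Fintype n] (M : Matrix n n ℂ) :
    (M.map (starRingEnd ℂ)).trace = starRingEnd ℂ M.trace :=
  (AddMonoidHom.map_trace (starRingEnd ℂ) M).symm

variable {n : Type*} [Fintype n] [DecidableEq n]

theorem exp_map_conj (A : Matrix n n ℂ) :
    exp (A.map (starRingEnd ℂ)) = (exp A).map (starRingEnd ℂ) := by
  have h : ∀ M : Matrix n n ℂ, M.map (starRingEnd ℂ) = Mᴴᵀ := fun M => by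
    ext i j; simp [conjTranspose_apply]
  rw [h, exp_transpose, exp_conjTranspose, h]

theorem IsHermitian.conjTranspose_exp_smul_s6 {H : Matrix n n ℂ} (hH : H.IsHermitian) (z : ℂ) :
    (NormedSpace.exp (z • H))ᴴ = NormedSpace.exp (star z • H) := by
  rw [← exp_conjTranspose, conjTranspose_smul, hH.eq]

/-- Conjugation by the antiunitary `Θ = U ∘ K`, `K` being complex conjugation. -/
def timeReversal (U M : Matrix n n ℂ) : Matrix n n ℂ :=
  U * M.map (starRingEnd ℂ) * Uᴴ

variable {U : Matrix n n ℂ}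

theorem timeReversal_smul (z : ℂ) (M : Matrix n n ℂ) :
    timeReversal U (z • M) = star z • timeReversal U M := by
  have : (z • M).map (starRingEnd ℂ) = star z • M.map (starRingEnd ℂ) := by ext; simp
  rw [timeReversal, timeReversal, this, mul_smul_comm, smul_mul_assoc]

theorem timeReversal_mul (hU : U ∈ unitaryGroup n ℂ) (M N : Matrix n n ℂ) :
    timeReversal U (M * N) = timeReversal U M * timeReversal U N := by
  have hUU : Uᴴ * U = 1 := Unitary.star_mul_self_of_mem hU
  simp only [timeReversal, Matrix.map_mul, Matrix.mul_assoc, ← Matrix.mul_assoc Uᴴ U, hUU,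
    Matrix.one_mul]

theorem trace_timeReversal (hU : U ∈ unitaryGroup n ℂ) (M : Matrix n n ℂ) :
    (timeReversal U M).trace = star M.trace := by
  have hUU : Uᴴ * U = 1 := Unitary.star_mul_self_of_mem hU
  rw [timeReversal, trace_mul_cycle, hUU, Matrix.one_mul]
  exact trace_map_conj M

theorem timeReversal_exp_smul (hU : U ∈ unitaryGroup n ℂ) {H : Matrix n n ℂ}
    (hUH : timeReversal U H = H) (z : ℂ) :
    timeReversal U (NormedSpace.exp (z • H)) = NormedSpace.exp (star z • H) := by
  have hinv : U⁻¹ = Uᴴ := inv_eq_right_inv (mem_unitaryGroup_iff.mp hU)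
  rw [timeReversal, ← exp_map_conj, ← hinv, ← exp_conj U _ (Unitary.isUnit_coe (U := ⟨U, hU⟩)),
    hinv]
  congr 1
  exact (timeReversal_smul z H).trans (congrArg _ hUH)

end Matrix

section TraceCorrelation

variable {n : Type*} [Fintype n] [DecidableEq n]

def traceCorrelation (H : Matrix n n ℂ) (t : ℝ) (A B : Matrix n n ℂ) : ℂ :=
  (exp ((-(Complex.I * t)) • H) * A * exp ((Complex.I * t) • H) * B).trace

theorem star_I_mul_ofReal (t : ℝ) : star (Complex.I * t) = -(Complex.I * t) := by
  simp

theorem conj_traceCorrelation_of_isHermitian {H A B : Matrix n n ℂ} (hH : H.IsHermitian)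
    (hA : A.IsHermitian) (hB : B.IsHermitian) (t : ℝ) :
    star (traceCorrelation H t A B) = traceCorrelation H t A B := by
  rw [traceCorrelation, ← trace_conjTranspose]
  simp only [conjTranspose_mul, hA.eq, hB.eq, hH.conjTranspose_exp_smul_s6, star_neg,
    star_I_mul_ofReal, neg_neg]
  rw [trace_mul_comm]
  simp only [Matrix.mul_assoc]

theorem conj_traceCorrelation_of_timeReversal {H A B U : Matrix n n ℂ}
    (hU : U ∈ unitaryGroup n ℂ) (hUH : timeReversal U H = H) (hUA : timeReversal U A = A)
    (hUB : timeReversal U B = B) (t : ℝ) :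
    star (traceCorrelation H t A B) = traceCorrelation H t B A := by
  rw [traceCorrelation, ← trace_timeReversal hU]
  simp only [timeReversal_mul hU, timeReversal_exp_smul hU hUH, hUA, hUB, star_neg,
    star_I_mul_ofReal, neg_neg]
  rw [Matrix.mul_assoc (_ * A), trace_mul_comm]
  simp only [traceCorrelation, Matrix.mul_assoc]

theorem traceCorrelation_comm {H A B U : Matrix n n ℂ} (hH : H.IsHermitian)
    (hA : A.IsHermitian) (hB : B.IsHermitian) (hU : U ∈ unitaryGroup n ℂ)
    (hUH : timeReversal U H = H) (hUA : timeReversal U A = A) (hUB : timeReversal U B = B)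
    (t : ℝ) : traceCorrelation H t A B = traceCorrelation H t B A := by
  rw [← conj_traceCorrelation_of_isHermitian hH hA hB,
    conj_traceCorrelation_of_timeReversal hU hUH hUA hUB]

theorem ttm_eq_mul_traceCorrelation {𝒜 : Type*} (H : Matrix n n ℂ) {P : 𝒜 → Matrix n n ℂ}
    {ν : Matrix n n ℂ} {a : 𝒜} {c : ℂ} (hν : P a * ν * P a = c • P a)
    (t : ℝ) (b : 𝒜) : ttm H P ν t b a = c * traceCorrelation H t (P a) (P b) := by
  have hcompress : exp ((-(Complex.I * t)) • H) * P a * ν * P a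
      = c • (exp ((-(Complex.I * t)) • H) * P a) := by
    rw [Matrix.mul_assoc _ (P a), Matrix.mul_assoc, hν, mul_smul_comm]
  rw [ttm, hcompress, smul_mul_assoc, smul_mul_assoc, trace_smul, smul_eq_mul, traceCorrelation]

end TraceCorrelation

theorem pointwise_detailed_balance_general
    {n 𝒜 : Type*} [Fintype n] [DecidableEq n]
    [Fintype 𝒜]
    (H : Matrix n n ℂ) (hH : H.IsHermitian)
    (P : 𝒜 → Matrix n n ℂ)
    (hPherm : ∀ a, (P a).IsHermitian)
    (hPidem : ∀ a, P a * P a = P a)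
    (hPorth : ∀ a b, a ≠ b → P a * P b = 0)
    (lam : 𝒜 → ℝ) (hlampos : ∀ a, 0 < lam a)
    (hTR : ∃ U : Matrix n n ℂ, U * Uᴴ = 1 ∧ Uᴴ * U = 1 ∧
      U * U.map (starRingEnd ℂ) = 1 ∧
      U * H.map (starRingEnd ℂ) * Uᴴ = H ∧
      ∀ a, U * (P a).map (starRingEnd ℂ) * Uᴴ = P a)
    (t : ℝ) (a b : 𝒜) :
    ttm H P (∑ c, (lam c : ℂ) • P c) t a b =
      ((lam b / lam a : ℝ) : ℂ) * ttm H P (∑ c, (lam c : ℂ) • P c) t b a := by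
  obtain ⟨U, hUstar, -, -, hUH, hUP⟩ := hTR
  have hU : U ∈ unitaryGroup n ℂ := mem_unitaryGroup_iff.mpr hUstar
  have hω : ∀ c, P c * (∑ d, (lam d : ℂ) • P d) * P c = (lam c : ℂ) • P c :=
    mul_sum_smul_mul_of_orthogonal hPidem hPorth _
  have hlam : (lam a : ℂ) ≠ 0 := Complex.ofReal_ne_zero.mpr (hlampos a).ne'
  rw [ttm_eq_mul_traceCorrelation H (hω b), ttm_eq_mul_traceCorrelation H (hω a),
    traceCorrelation_comm hH (hPherm b) (hPherm a) hU hUH (hUP b) (hUP a)]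
  push_cast
  field_simp

theorem pointwise_detailed_balance
    {n 𝒜 : Type*} [Fintype n] [DecidableEq n] [Nonempty n]
    [Fintype 𝒜] [DecidableEq 𝒜] [Nonempty 𝒜]
    (H : Matrix n n ℂ) (hH : H.IsHermitian)
    (P : 𝒜 → Matrix n n ℂ)
    (hPherm : ∀ a, (P a).IsHermitian)
    (hPidem : ∀ a, P a * P a = P a)
    (hPne : ∀ a, P a ≠ 0)
    (hPorth : ∀ a b, a ≠ b → P a * P b = 0)
    (hPsum : ∑ a, P a = 1)
    (lam : 𝒜 → ℝ) (hlampos : ∀ a, 0 < lam a)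
    (hlaminj : Function.Injective lam)
    (hlamsum : ∑ a, (lam a : ℂ) * (P a).trace = 1)
    (hTR : ∃ U : Matrix n n ℂ, U * Uᴴ = 1 ∧ Uᴴ * U = 1 ∧
      U * U.map (starRingEnd ℂ) = 1 ∧
      U * H.map (starRingEnd ℂ) * Uᴴ = H ∧
      ∀ a, U * (P a).map (starRingEnd ℂ) * Uᴴ = P a)
    (t : ℝ) (a b : 𝒜) :
    ttm H P (∑ c, (lam c : ℂ) • P c) t a b =
      ((lam b / lam a : ℝ) : ℂ) * ttm H P (∑ c, (lam c : ℂ) • P c) t b a :=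
  pointwise_detailed_balance_general H hH P hPherm hPidem hPorth lam hlampos hTR t a b
end
end
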